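/- arXiv:1007.1737 — 2 statements merged into one kernel-verified Lean document; each statement's English description precedes it below -/
import Mathlib

section
/- Let x : ℝ → ℝ² be a twice differentiable curve. The areal velocity t ↦ (1/2)(x(t) × x'(t)) is constant on ℝ if and only if for every t ∈ ℝ the acceleration is centripetal, i.e. x(t) × x''(t) = 0 (the acceleration x''(t) is collinear with the position vector x(t)). (Kepler's second law holds if and only if the force is directed toward the center.) -/
noncomputable section

/-- Planar cross product `u × v = u₁v₂ − u₂v₁` on `ℝ²`. -/
def cross (u v : EuclideanSpace ℝ (Fin 2)) : ℝ := u 0 * v 1 - u 1 * v 0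

theorem cross_self_eq_zero (u : EuclideanSpace ℝ (Fin 2)) : cross u u = 0 := by
  simp only [cross]
  ring

theorem HasDerivAt.cross {f g : ℝ → EuclideanSpace ℝ (Fin 2)} {f' g' : EuclideanSpace ℝ (Fin 2)}
    {t : ℝ} (hf : HasDerivAt f f' t) (hg : HasDerivAt g g' t) :
    HasDerivAt (fun s => _root_.cross (f s) (g s))
      (_root_.cross f' (g t) + _root_.cross (f t) g') t := by
  have coord : ∀ {h : ℝ → EuclideanSpace ℝ (Fin 2)} {h'} (i : Fin 2), HasDerivAt h h' t →
      HasDerivAt (fun s => h s i) (h' i) t :=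
    fun i hh => (EuclideanSpace.proj (𝕜 := ℝ) (ι := Fin 2) i).hasFDerivAt.comp_hasDerivAt t hh
  refine (((coord 0 hf).fun_mul (coord 1 hg)).fun_sub
    ((coord 1 hf).fun_mul (coord 0 hg))).congr_deriv ?_
  simp only [_root_.cross]
  ring

theorem hasDerivAt_cross_self_deriv {x : ℝ → EuclideanSpace ℝ (Fin 2)} {t : ℝ}
    (hx : DifferentiableAt ℝ x t) (hx' : DifferentiableAt ℝ (deriv x) t) :
    HasDerivAt (fun s => cross (x s) (deriv x s)) (cross (x t) (deriv (deriv x) t)) t := by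
  simpa only [cross_self_eq_zero, zero_add] using hx.hasDerivAt.cross hx'.hasDerivAt

theorem exists_forall_eq_iff_of_hasDerivAt {𝕜 G : Type*} [RCLike 𝕜] [NormedAddCommGroup G]
    [NormedSpace 𝕜 G] {f f' : 𝕜 → G} (hf : ∀ t, HasDerivAt f (f' t) t) :
    (∃ c, ∀ t, f t = c) ↔ ∀ t, f' t = 0 := by
  constructor
  · rintro ⟨c, hc⟩ t
    have hconst : f = fun _ => c := funext hc
    exact (hf t).unique (hconst ▸ hasDerivAt_const t c)
  · intro h
    exact ⟨f 0, fun t => is_const_of_deriv_eq_zero (fun s => (hf s).differentiableAt)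
      (fun s => (hf s).deriv.trans (h s)) t 0⟩

/-- Kepler's second law (constant areal velocity) holds if and only if the
acceleration is centripetal (collinear with the position vector). -/
theorem arealVelocity_const_iff_centripetal
    (x : ℝ → EuclideanSpace ℝ (Fin 2))
    (hx : Differentiable ℝ x)
    (hx' : Differentiable ℝ (deriv x)) :
    (∃ c : ℝ, ∀ t : ℝ, (1 / 2) * cross (x t) (deriv x t) = c) ↔
      (∀ t : ℝ, cross (x t) (deriv (deriv x) t) = 0) := by
  have hArea (t : ℝ) := (hasDerivAt_cross_self_deriv (hx t) (hx' t)).const_mul (1 / 2 : ℝ)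
  rw [exists_forall_eq_iff_of_hasDerivAt hArea]
  simp
end
end

section
/- Let x : ℝ → ℝ² be a twice differentiable curve with x(t) ≠ 0 for all t, let K > 0, and assume the acceleration is centripetal with magnitude inversely proportional to the square of the distance: x''(t) = −(K/‖x(t)‖³) • x(t) for all t. Then: (i) the areal velocity (1/2)(x(t) × x'(t)) is constant, equal to h/2 for some constant h ∈ ℝ (Kepler's second law); and (ii) the orbit is a conic section with focus at the origin: there exists a vector E ∈ ℝ² (the eccentricity vector) such that for every t, ‖x(t)‖ + ⟨E, x(t)⟩ = h²/K, where h is the constant from (i). -/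
open RealInnerProductSpace

noncomputable section

/-! The areal velocity `h = x × x'` is conserved because the force is central. In an oriented
plane, with `J` the rotation by a right angle, the identity `‖x‖² x' - ⟪x, x'⟫ x = (x × x') J x`
shows that the radial unit vector `x / ‖x‖` has derivative `(h / ‖x‖³) J x`; under the
inverse-square law this is also the derivative of `-(h / K) J x'`. Hence the Laplace–Runge–Lenz
vector `E = -(h / K) J x' - x / ‖x‖` is conserved, and `⟪E, x⟫ = h² / K - ‖x‖`. -/

theorem HasDerivAt.inv_norm_smul {F : Type*} [NormedAddCommGroup F] [InnerProductSpace ℝ F]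
    {f : ℝ → F} {f' : F} {t : ℝ} (hf : HasDerivAt f f' t) (h0 : f t ≠ 0) :
    HasDerivAt (fun s => ‖f s‖⁻¹ • f s)
      ((‖f t‖ ^ 3)⁻¹ • (‖f t‖ ^ 2 • f' - ⟪f t, f'⟫ • f t)) t := by
  have hr : 0 < ‖f t‖ := norm_pos_iff.mpr h0
  have hnorm : HasDerivAt (fun s => ‖f s‖) (⟪f t, f'⟫ / ‖f t‖) t := by
    have := hf.norm_sq.sqrt (by positivity)
    simp only [Real.sqrt_sq (norm_nonneg _)] at this
    convert this using 1
    field_simp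
  refine ((hnorm.inv hr.ne').smul hf).congr_deriv ?_
  rw [Pi.inv_apply, smul_sub, smul_smul, smul_smul, sub_eq_add_neg, ← neg_smul]
  congr 2 <;> field_simp

namespace Orientation

variable {E : Type*} [NormedAddCommGroup E] [InnerProductSpace ℝ E]
  [Fact (Module.finrank ℝ E = 2)] (o : Orientation ℝ E (Fin 2))

local notation "ω" => o.areaForm
local notation "J" => o.rightAngleRotation

theorem norm_sq_smul_sub_inner_smul (a x : E) : ‖a‖ ^ 2 • x - ⟪a, x⟫ • a = ω a x • J a := by
  refine ext_inner_right ℝ fun y => ?_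
  rw [inner_sub_left, real_inner_smul_left, real_inner_smul_left, real_inner_smul_left,
    inner_rightAngleRotation_left, ← o.inner_mul_inner_add_areaForm_mul_areaForm a x y]
  ring

theorem hasDerivAt_areaForm {f g : ℝ → E} {f' g' : E} {t : ℝ} (hf : HasDerivAt f f' t)
    (hg : HasDerivAt g g' t) :
    HasDerivAt (fun s => ω (f s) (g s)) (ω f' (g t) + ω (f t) g') t := by
  simpa only [areaForm'_apply, LinearMap.coe_toContinuousLinearMap', add_comm] using
    o.areaForm'.hasDerivAt_of_bilinear (fun _ => hf) (fun _ => hg)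

theorem hasDerivAt_areaForm_of_central {x v : ℝ → E} {c t : ℝ} (hx : HasDerivAt x (v t) t)
    (hv : HasDerivAt v (c • x t) t) : HasDerivAt (fun s => ω (x s) (v s)) 0 t := by
  simpa using o.hasDerivAt_areaForm hx hv

/-- The Laplace–Runge–Lenz vector at position `p` and velocity `q`. The constant `h` is a
parameter rather than `ω p q`, so that it stays fixed when differentiating along an orbit. -/
def eccentricityVector (K h : ℝ) (p q : E) : E := -(h / K) • J q - ‖p‖⁻¹ • p

theorem norm_add_inner_eccentricityVector (K : ℝ) (p q : E) :
    ‖p‖ + ⟪o.eccentricityVector K (ω p q) p q, p⟫ = ω p q ^ 2 / K := by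
  rw [eccentricityVector, inner_sub_left, real_inner_smul_left, real_inner_smul_left,
    inner_rightAngleRotation_left, o.areaForm_swap q p, real_inner_self_eq_norm_sq, sq ‖p‖,
    ← mul_assoc, inv_mul_mul_self]
  ring

theorem hasDerivAt_eccentricityVector {x v : ℝ → E} {K t : ℝ} (hK : K ≠ 0) (h0 : x t ≠ 0)
    (hx : HasDerivAt x (v t) t) (hv : HasDerivAt v (-(K / ‖x t‖ ^ 3) • x t) t) :
    HasDerivAt (fun s => o.eccentricityVector K (ω (x t) (v t)) (x s) (v s)) 0 t := by
  have hJv := ((J : E →L[ℝ] E).hasFDerivAt.comp_hasDerivAt t hv).const_smul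
    (-(ω (x t) (v t) / K))
  refine (hJv.sub (hx.inv_norm_smul h0)).congr_deriv ?_
  rw [o.norm_sq_smul_sub_inner_smul]
  simp only [map_smul, smul_smul, ContinuousLinearEquiv.coe_coe,
    LinearIsometryEquiv.coe_toContinuousLinearEquiv]
  rw [← sub_smul]
  refine smul_eq_zero_of_left ?_ _
  field_simp
  ring

theorem exists_areaForm_eq_and_norm_add_inner_eq {x v : ℝ → E} {K : ℝ} (hK : K ≠ 0)
    (h0 : ∀ t, x t ≠ 0) (hx : ∀ t, HasDerivAt x (v t) t)
    (hv : ∀ t, HasDerivAt v (-(K / ‖x t‖ ^ 3) • x t) t) :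
    ∃ h : ℝ, (∀ t, ω (x t) (v t) = h) ∧ ∃ e : E, ∀ t, ‖x t‖ + ⟪e, x t⟫ = h ^ 2 / K := by
  have hω (t : ℝ) : HasDerivAt (fun s => ω (x s) (v s)) 0 t :=
    o.hasDerivAt_areaForm_of_central (hx t) (hv t)
  have hω_const := is_const_of_deriv_eq_zero (fun s => (hω s).differentiableAt)
    (fun s => (hω s).deriv)
  have he (t : ℝ) :
      HasDerivAt (fun s => o.eccentricityVector K (ω (x 0) (v 0)) (x s) (v s)) 0 t := by
    simpa only [hω_const t 0] using o.hasDerivAt_eccentricityVector hK (h0 t) (hx t) (hv t)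
  have he_const := is_const_of_deriv_eq_zero (fun s => (he s).differentiableAt)
    (fun s => (he s).deriv)
  refine ⟨_, fun t => hω_const t 0, o.eccentricityVector K (ω (x 0) (v 0)) (x 0) (v 0),
    fun t => ?_⟩
  rw [← he_const t 0, ← hω_const t 0]
  exact o.norm_add_inner_eccentricityVector K (x t) (v t)

end Orientation

open scoped EuclideanSpace

theorem cross_eq_areaForm (u v : EuclideanSpace ℝ (Fin 2)) :
    cross u v = (EuclideanSpace.basisFun (Fin 2) ℝ).toBasis.orientation.areaForm u v := by
  rw [Orientation.areaForm_to_volumeForm, Orientation.volumeForm_robust _ _ rfl,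
    Module.Basis.det_apply, Matrix.det_fin_two]
  simp [cross, Module.Basis.toMatrix_apply, mul_comm]

/-- A centripetal inverse-square acceleration implies Kepler's second law
(constant areal velocity `h/2`) and that the orbit is a conic section with
focus at the origin: `‖x(t)‖ + ⟨E, x(t)⟩ = h²/K` for some eccentricity
vector `E`. -/
theorem inverse_square_implies_area_law_and_conic
    (x : ℝ → EuclideanSpace ℝ (Fin 2))
    (hx : Differentiable ℝ x) (hx' : Differentiable ℝ (deriv x))
    (h0 : ∀ t : ℝ, x t ≠ 0) (K : ℝ) (hK : 0 < K)
    (hacc : ∀ t : ℝ, deriv (deriv x) t = (-(K / ‖x t‖ ^ 3)) • x t) :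
    ∃ h : ℝ,
      (∀ t : ℝ, (1 / 2) * cross (x t) (deriv x t) = h / 2) ∧
      ∃ E : EuclideanSpace ℝ (Fin 2),
        ∀ t : ℝ, ‖x t‖ + ⟪E, x t⟫ = h ^ 2 / K := by
  have hv (t : ℝ) : HasDerivAt x (deriv x t) t := (hx t).hasDerivAt
  have ha (t : ℝ) : HasDerivAt (deriv x) (-(K / ‖x t‖ ^ 3) • x t) t :=
    hacc t ▸ (hx' t).hasDerivAt
  obtain ⟨h, hω, E, hE⟩ := (EuclideanSpace.basisFun (Fin 2) ℝ).toBasis.orientation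
    |>.exists_areaForm_eq_and_norm_add_inner_eq hK.ne' h0 hv ha
  exact ⟨h, fun t => by rw [cross_eq_areaForm, hω t]; ring, E, hE⟩
end
end
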